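/- Let C = (1, 2, 3, c₄, c₄+1, 2c₄) with c₄ > 4. Then C is canonical and the subsystem C' = (1, 2, 3, c₄, c₄+1) is noncanonical; in particular, 2c₄ is a counterexample to C'. -/

import Mathlib

open Finset

/-- `x` is a representation of value `v` in the coin system `c 1, …, c n`. -/
def IsRepr (n : ℕ) (c : ℕ → ℕ) (v : ℕ) (x : ℕ → ℕ) : Prop :=
  ∑ i ∈ Finset.Icc 1 n, c i * x i = v

/-- Minimum number of coins over all representations of `v`. -/
noncomputable def opt (n : ℕ) (c : ℕ → ℕ) (v : ℕ) : ℕ :=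
  sInf {k | ∃ x : ℕ → ℕ, IsRepr n c v x ∧ ∑ i ∈ Finset.Icc 1 n, x i = k}

/-- Number of coins used by the greedy algorithm to pay `v`. -/
def grd (n : ℕ) (c : ℕ → ℕ) (v : ℕ) : ℕ :=
  if hv : v = 0 then 0
  else
    let m := ((Finset.Icc 1 n).filter (fun i => c i ≤ v)).sup c
    if hm : 0 < m then grd n c (v - m) + 1 else 0
termination_by v
decreasing_by omega

/-- The system is canonical: greedy is optimal for every positive value. -/
def Canonical (n : ℕ) (c : ℕ → ℕ) : Prop :=
  ∀ v, 0 < v → opt n c v = grd n c v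

/-- `w` is a counterexample to the system. -/
def IsCex (n : ℕ) (c : ℕ → ℕ) (w : ℕ) : Prop :=
  0 < w ∧ opt n c w < grd n c w

/-- `w` is the minimum counterexample to the system. -/
def MinCex (n : ℕ) (c : ℕ → ℕ) (w : ℕ) : Prop :=
  IsCex n c w ∧ ∀ u, IsCex n c u → w ≤ u

/-- A (currency) system: first coin is `1` and coins strictly increase. -/
def IsSystem (n : ℕ) (c : ℕ → ℕ) : Prop :=
  c 1 = 1 ∧ StrictMonoOn c (Set.Icc 1 n)

/-!
Greedy is optimal as soon as its count `g` satisfies `g v ≤ g (v - cᵢ) + 1` for every coin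
`cᵢ ≤ v`: removing the coins of any representation one at a time shows that `g` never exceeds
its size. For `(1, 2, 3, c₄, c₄ + 1, 2c₄)` greedy pays `⌊v / 2c₄⌋` coins `2c₄` and then the
remainder `r < 2c₄` with at most one coin `c₄` or `c₄ + 1` followed by threes, so `g` has a
closed form for which the exchange inequality is elementary arithmetic. Without the coin `2c₄`,
greedy pays `2c₄` as `(c₄ + 1) + 3 + ⋯`, at least three coins, against `c₄ + c₄`.
-/

section General

variable {n : ℕ} {c : ℕ → ℕ}

theorem sum_mul_pi_single {f : ℕ → ℕ} {j : ℕ} (hj : j ∈ Icc 1 n) (k : ℕ) :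
    ∑ i ∈ Icc 1 n, f i * (Pi.single j k : ℕ → ℕ) i = f j * k := by
  simp only [Pi.single_apply, mul_ite, mul_zero, sum_ite_eq', hj, if_true]

theorem isRepr_add_single {v : ℕ} {x : ℕ → ℕ} {j : ℕ} (hx : IsRepr n c v x)
    (hj : j ∈ Icc 1 n) (k : ℕ) : IsRepr n c (v + c j * k) (x + Pi.single j k : ℕ → ℕ) := by
  simp only [IsRepr, Pi.add_apply, mul_add, sum_add_distrib, sum_mul_pi_single hj] at hx ⊢
  rw [hx]

theorem sum_add_single {x : ℕ → ℕ} {j : ℕ} (hj : j ∈ Icc 1 n) (k : ℕ) :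
    ∑ i ∈ Icc 1 n, (x + Pi.single j k : ℕ → ℕ) i = ∑ i ∈ Icc 1 n, x i + k := by
  simp only [Pi.add_apply, sum_add_distrib, sum_pi_single', if_pos hj]

theorem opt_le_of_isRepr {v : ℕ} {x : ℕ → ℕ} (hx : IsRepr n c v x) :
    opt n c v ≤ ∑ i ∈ Icc 1 n, x i :=
  Nat.sInf_le ⟨x, hx, rfl⟩

theorem grd_zero : grd n c 0 = 0 := by
  rw [grd, dif_pos rfl]

theorem grd_eq_grd_sub_add_one {v j : ℕ} (hj : j ∈ Icc 1 n) (hcj : 0 < c j) (hjv : c j ≤ v)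
    (hmax : ∀ i ∈ Icc 1 n, c i ≤ v → c i ≤ c j) : grd n c v = grd n c (v - c j) + 1 := by
  have hsup : ((Icc 1 n).filter (fun i => c i ≤ v)).sup c = c j :=
    le_antisymm (Finset.sup_le fun i hi => hmax i (mem_filter.1 hi).1 (mem_filter.1 hi).2)
      (le_sup (f := c) (mem_filter.2 ⟨hj, hjv⟩))
  rw [grd, dif_neg (by omega)]
  simp only [hsup, dif_pos hcj]

theorem exists_max_coin (hn : 1 ≤ n) (h1 : c 1 = 1) {v : ℕ} (hv : 0 < v) :
    ∃ j ∈ Icc 1 n, 0 < c j ∧ c j ≤ v ∧ ∀ i ∈ Icc 1 n, c i ≤ v → c i ≤ c j := by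
  have h1s : 1 ∈ (Icc 1 n).filter (fun i => c i ≤ v) :=
    mem_filter.2 ⟨mem_Icc.2 ⟨le_rfl, hn⟩, by omega⟩
  obtain ⟨j, hjs, hj⟩ := exists_mem_eq_sup _ ⟨1, h1s⟩ c
  have hmax : ∀ i ∈ Icc 1 n, c i ≤ v → c i ≤ c j := fun i hi hiv =>
    hj ▸ le_sup (f := c) (mem_filter.2 ⟨hi, hiv⟩)
  obtain ⟨hjn, hjv⟩ := mem_filter.1 hjs
  exact ⟨j, hjn, by have := hmax 1 (mem_filter.1 h1s).1 (by omega); omega, hjv, hmax⟩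

theorem grd_pos (hn : 1 ≤ n) (h1 : c 1 = 1) {v : ℕ} (hv : 0 < v) : 0 < grd n c v := by
  obtain ⟨j, hj, hcj, hjv, hmax⟩ := exists_max_coin hn h1 hv
  rw [grd_eq_grd_sub_add_one hj hcj hjv hmax]
  omega

theorem exists_isRepr_sum_eq_grd (hn : 1 ≤ n) (h1 : c 1 = 1) (v : ℕ) :
    ∃ x, IsRepr n c v x ∧ ∑ i ∈ Icc 1 n, x i = grd n c v := by
  induction v using Nat.strong_induction_on with
  | _ v ih =>
  rcases Nat.eq_zero_or_pos v with rfl | hv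
  · exact ⟨0, by simp [IsRepr], by simp [grd_zero]⟩
  obtain ⟨j, hj, hcj, hjv, hmax⟩ := exists_max_coin hn h1 hv
  obtain ⟨x, hx, hsum⟩ := ih (v - c j) (by omega)
  refine ⟨x + Pi.single j 1, ?_, ?_⟩
  · simpa [Nat.sub_add_cancel hjv] using isRepr_add_single hx hj 1
  · rw [sum_add_single hj, hsum, grd_eq_grd_sub_add_one hj hcj hjv hmax]

theorem le_sum_of_isRepr {G : ℕ → ℕ} (hG0 : G 0 = 0)
    (hG : ∀ i ∈ Icc 1 n, ∀ v, c i ≤ v → G v ≤ G (v - c i) + 1) {v : ℕ} {x : ℕ → ℕ}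
    (hx : IsRepr n c v x) : G v ≤ ∑ i ∈ Icc 1 n, x i := by
  induction hk : ∑ i ∈ Icc 1 n, x i generalizing v x with
  | zero =>
    have hzero : ∀ i ∈ Icc 1 n, x i = 0 := sum_eq_zero_iff.1 hk
    have hv : v = 0 := by
      rw [← hx]
      exact sum_eq_zero fun i hi => by rw [hzero i hi, mul_zero]
    rw [hv, hG0]
  | succ k ih =>
    obtain ⟨j, hj, hxj⟩ : ∃ j ∈ Icc 1 n, x j ≠ 0 := by
      by_contra! h
      rw [sum_eq_zero h] at hk
      exact k.succ_ne_zero hk.symm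
    set x' := x - Pi.single j 1
    have hx_eq : x' + Pi.single j 1 = x := by
      ext i
      by_cases hij : i = j
      · subst hij
        simp only [x', Pi.add_apply, Pi.sub_apply, Pi.single_eq_same]
        omega
      · simp [x', hij]
    have hv : v = ∑ i ∈ Icc 1 n, c i * x' i + c j := by
      have := isRepr_add_single (c := c) (rfl : IsRepr n c _ x') hj 1
      rw [hx_eq] at this
      rw [← hx, this, mul_one]
    have hk' : ∑ i ∈ Icc 1 n, x' i = k := by
      have := sum_add_single (x := x') hj 1
      rw [hx_eq] at this
      omega
    calc G v ≤ G (v - c j) + 1 := hG j hj v (by omega)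
      _ ≤ k + 1 := by
        rw [show v - c j = ∑ i ∈ Icc 1 n, c i * x' i by omega]
        exact Nat.add_le_add_right (ih rfl hk') 1

theorem canonical_of_grd_le_grd_sub_add_one (hn : 1 ≤ n) (h1 : c 1 = 1)
    (hexch : ∀ i ∈ Icc 1 n, ∀ v, c i ≤ v → grd n c v ≤ grd n c (v - c i) + 1) :
    Canonical n c := by
  intro v _
  obtain ⟨x, hx, hsum⟩ := exists_isRepr_sum_eq_grd hn h1 v
  refine le_antisymm (hsum ▸ opt_le_of_isRepr hx) (le_csInf ⟨_, x, hx, hsum⟩ ?_)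
  rintro k ⟨y, hy, rfl⟩
  exact le_sum_of_isRepr grd_zero hexch hy

theorem not_canonical_of_isCex {w : ℕ} (hw : IsCex n c w) : ¬ Canonical n c :=
  fun h => (h w hw.1 ▸ hw.2).false

end General

namespace FamilyA

/-- Greedy count of a remainder `r < 2c₄`: threes topped up by a `1` or `2` below `c₄`, and
one coin `c₄` or `c₄ + 1` in front of them otherwise. -/
def smallCount (c4 r : ℕ) : ℕ :=
  if r < c4 then (r + 2) / 3 else (r - c4 + 1) / 3 + 1

def count (c4 v : ℕ) : ℕ :=
  v / (2 * c4) + smallCount c4 (v % (2 * c4))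

variable {c4 : ℕ}

theorem count_of_lt {v : ℕ} (hv : v < 2 * c4) : count c4 v = smallCount c4 v := by
  rw [count, Nat.div_eq_of_lt hv, Nat.mod_eq_of_lt hv, zero_add]

theorem count_add_two_mul (hc4 : 0 < c4) (v : ℕ) : count c4 (v + 2 * c4) = count c4 v + 1 := by
  rw [count, count, Nat.add_div_right _ (by omega), Nat.add_mod_right]
  omega

theorem count_le_count_sub_add_one (hc4 : 1 < c4) {d : ℕ}
    (hd : d = 1 ∨ d = 2 ∨ d = 3 ∨ d = c4 ∨ d = c4 + 1 ∨ d = 2 * c4) (v : ℕ) (hdv : d ≤ v) :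
    count c4 v ≤ count c4 (v - d) + 1 := by
  induction v using Nat.strong_induction_on with
  | _ v ih =>
  by_cases hv : v < 2 * c4
  · rw [count_of_lt hv, count_of_lt (by omega), smallCount, smallCount]
    split_ifs <;> omega
  obtain ⟨w, rfl⟩ : ∃ w, v = w + 2 * c4 := ⟨v - 2 * c4, by omega⟩
  rw [count_add_two_mul (by omega)]
  by_cases hdw : d ≤ w
  · rw [show w + 2 * c4 - d = w - d + 2 * c4 by omega, count_add_two_mul (by omega)]
    exact Nat.add_le_add_right (ih w (by omega) hdw) 1
  · rw [count_of_lt (by omega), count_of_lt (by omega), smallCount, smallCount]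
    split_ifs <;> omega

section

variable {c : ℕ → ℕ} (hc4 : 4 < c4) (h1 : c 1 = 1) (h2 : c 2 = 2) (h3 : c 3 = 3)
  (h4 : c 4 = c4) (h5 : c 5 = c4 + 1) (h6 : c 6 = 2 * c4)
include hc4 h1 h2 h3 h4 h5 h6

theorem count_eq_count_sub_add_one {v j : ℕ} (hj : j ∈ Icc 1 6) (hjv : c j ≤ v)
    (hmax : ∀ i ∈ Icc 1 6, c i ≤ v → c i ≤ c j) : count c4 v = count c4 (v - c j) + 1 := by
  have hbound : ∀ i ∈ Icc 1 6, c j < c i → v < c i := fun i hi hji =>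
    lt_of_not_ge fun hiv => (hmax i hi hiv).not_gt hji
  obtain ⟨hj1, hj6⟩ := mem_Icc.1 hj
  by_cases hj6' : j = 6
  · subst hj6'
    rw [h6] at hjv ⊢
    obtain ⟨w, rfl⟩ : ∃ w, v = w + 2 * c4 := ⟨v - 2 * c4, by omega⟩
    rw [count_add_two_mul (by omega), Nat.add_sub_cancel]
  have hv : v < 2 * c4 := h6 ▸ hbound 6 (by simp) (by interval_cases j <;> omega)
  have hj5 : j ≤ 5 := by omega
  rw [count_of_lt hv, count_of_lt (by omega), smallCount, smallCount]
  interval_cases j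
  · have := hbound 2 (by simp) (by omega); split_ifs <;> omega
  · have := hbound 3 (by simp) (by omega); split_ifs <;> omega
  · have := hbound 4 (by simp) (by omega); split_ifs <;> omega
  · have := hbound 5 (by simp) (by omega); split_ifs <;> omega
  · split_ifs <;> omega

theorem grd_six_eq_count (v : ℕ) : grd 6 c v = count c4 v := by
  induction v using Nat.strong_induction_on with
  | _ v ih =>
  rcases Nat.eq_zero_or_pos v with rfl | hv
  · rw [grd_zero, count_of_lt (by omega), smallCount, if_pos (by omega)]
  obtain ⟨j, hj, hcj, hjv, hmax⟩ := exists_max_coin (n := 6) (by norm_num) h1 hv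
  rw [grd_eq_grd_sub_add_one hj hcj hjv hmax, ih _ (by omega),
    count_eq_count_sub_add_one hc4 h1 h2 h3 h4 h5 h6 hj hjv hmax]

theorem canonical_six : Canonical 6 c := by
  refine canonical_of_grd_le_grd_sub_add_one (by norm_num) h1 fun i hi v hiv => ?_
  simp only [grd_six_eq_count hc4 h1 h2 h3 h4 h5 h6]
  refine count_le_count_sub_add_one (by omega) ?_ v hiv
  obtain ⟨hi1, hi6⟩ := mem_Icc.1 hi
  interval_cases i <;> omega

end

theorem isCex_five_two_mul {c : ℕ → ℕ} (hc4 : 4 < c4) (h1 : c 1 = 1) (h2 : c 2 = 2)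
    (h3 : c 3 = 3) (h4 : c 4 = c4) (h5 : c 5 = c4 + 1) : IsCex 5 c (2 * c4) := by
  have hopt : opt 5 c (2 * c4) ≤ 2 := by
    have hrepr : IsRepr 5 c (2 * c4) (Pi.single 4 2) := by
      rw [IsRepr, sum_mul_pi_single (by simp), h4, mul_comm]
    simpa [sum_pi_single'] using opt_le_of_isRepr hrepr
  have hgrd : 3 ≤ grd 5 c (2 * c4) := by
    rw [grd_eq_grd_sub_add_one (j := 5) (by simp) (by omega) (by omega) ?_,
      grd_eq_grd_sub_add_one (v := 2 * c4 - c 5) (j := 3) (by simp) (by omega) (by omega) ?_]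
    · have := grd_pos (n := 5) (by norm_num) h1 (v := 2 * c4 - c 5 - c 3) (by omega)
      omega
    all_goals
      intro i hi hiv
      obtain ⟨hi1, hi5⟩ := mem_Icc.1 hi
      interval_cases i <;> omega
  exact ⟨by omega, by omega⟩

end FamilyA

theorem family_a_canonical (c : ℕ → ℕ) (c4 : ℕ) (hc4 : 4 < c4)
    (h1 : c 1 = 1) (h2 : c 2 = 2) (h3 : c 3 = 3) (h4 : c 4 = c4)
    (h5 : c 5 = c4 + 1) (h6 : c 6 = 2 * c4) :
    Canonical 6 c ∧ ¬ Canonical 5 c ∧ IsCex 5 c (2 * c4) := by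
  have hcex := FamilyA.isCex_five_two_mul hc4 h1 h2 h3 h4 h5
  exact ⟨FamilyA.canonical_six hc4 h1 h2 h3 h4 h5 h6, not_canonical_of_isCex hcex, hcex⟩
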